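/- Let λ ∈ ℂ \ {0} and * ∈ {p, m}, suppose K_* ≠ 0, and let w ∈ ℂ satisfy w² = J_*² − 4 K_* K_*'. Then the vector v = (−(λ/(2 b_*))(J_* + w − 2 a_* e^{2γ} λ⁻¹ K_*), K_*) ∈ ℂ² is nonzero and satisfies T_* v = ζ v with ζ = (λ + λ⁻¹ − 2 p a_* cosh(2γ) + w)/(2 b_* q). -/

import Mathlib

noncomputable section
open Complex Matrix

/-- The transfer matrix `T_*` for parameters `(a_*, b_*) = (aS, bS)`. -/
def Tmat (γ p aS : ℝ) (q bS lam : ℂ) : Matrix (Fin 2) (Fin 2) ℂ :=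
  (1 / (bS * q * lam)) •
    !![lam ^ 2 - 2 * (aS : ℂ) * (p : ℂ) * (Real.cosh (2 * γ) : ℂ) * lam + (aS : ℂ) ^ 2,
        -(starRingEnd ℂ) bS * ((p : ℂ) * lam - (aS : ℂ) * (Real.exp (2 * γ) : ℂ));
      -(bS * ((p : ℂ) * lam - (aS : ℂ) * (Real.exp (-(2 * γ)) : ℂ))),
        ((‖bS‖ : ℝ) : ℂ) ^ 2]

/-- `K_* = p λ − a_* e^{−2γ}`. -/
def Kc (γ p aS : ℝ) (lam : ℂ) : ℂ := (p : ℂ) * lam - (aS : ℂ) * (Real.exp (-(2 * γ)) : ℂ)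

/-- `K_*' = a_* e^{2γ} − p λ⁻¹`. -/
def Kc' (γ p aS : ℝ) (lam : ℂ) : ℂ := (aS : ℂ) * (Real.exp (2 * γ) : ℂ) - (p : ℂ) * lam⁻¹

/-- `J_* = λ − λ⁻¹ + 2 p a_* sinh(2γ)`. -/
def Jc (γ p aS : ℝ) (lam : ℂ) : ℂ :=
  lam - lam⁻¹ + 2 * (p : ℂ) * (aS : ℂ) * (Real.sinh (2 * γ) : ℂ)

/-!
`T_*` is `(b_* q λ)⁻¹ N` for the matrix `N = transferCore`, which by `|b_*|² = 1 - a_*²` has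
trace `λ² - 2 p a_* cosh(2γ) λ + 1` and determinant `(1 - a_*²)(1 - p²) λ²`. Its discriminant is
`λ² (J_*² - 4 K_* K_*')`, so `μ = λ (λ + λ⁻¹ - 2 p a_* cosh(2γ) + w) / 2` is a root of its
characteristic polynomial. For a `2 × 2` matrix `[[A, B], [C, D]]` and such a root `μ`, the vector
`(μ - D, C)` is an eigenvector for `μ`; the given `v` is `-b_*⁻¹` times it, its second entry is
`K_* ≠ 0`, and `ζ = μ / (b_* q λ)`.
-/

theorem Matrix.mulVec_eq_smul_of_isRoot_charpoly_fin_two {R : Type*} [CommRing R] [Nontrivial R]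
    (M : Matrix (Fin 2) (Fin 2) R) {μ : R} (h : M.charpoly.IsRoot μ) :
    M *ᵥ ![μ - M 1 1, M 1 0] = μ • ![μ - M 1 1, M 1 0] := by
  simp only [charpoly_fin_two, Polynomial.IsRoot, Polynomial.eval_add, Polynomial.eval_sub,
    Polynomial.eval_pow, Polynomial.eval_mul, Polynomial.eval_X, Polynomial.eval_C,
    trace_fin_two, det_fin_two] at h
  ext i
  fin_cases i <;> simp only [mulVec, dotProduct, Fin.zero_eta, Fin.mk_one, Fin.sum_univ_two,
    cons_val_zero, cons_val_one, cons_val_fin_one, Pi.smul_apply, smul_eq_mul]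
  · linear_combination -h
  · ring

theorem ne_zero_of_sq_add_norm_sq_eq_one {E : Type*} [NormedAddCommGroup E] {a : ℝ} {b : E}
    (ha : a ∈ Set.Ioo (-1 : ℝ) 1) (hab : a ^ 2 + ‖b‖ ^ 2 = 1) : b ≠ 0 := by
  rintro rfl
  have : a ^ 2 < 1 := (sq_lt_one_iff_abs_lt_one a).2 (abs_lt.2 ha)
  rw [norm_zero, zero_pow two_ne_zero, add_zero] at hab
  exact this.ne hab

namespace Complex

theorem ofReal_exp_neg (x : ℝ) : (Real.exp (-x) : ℂ) = (Real.exp x : ℂ)⁻¹ := by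
  push_cast [Real.exp_neg]; rfl

theorem ofReal_cosh_eq (x : ℝ) :
    (Real.cosh x : ℂ) = ((Real.exp x : ℂ) + (Real.exp x : ℂ)⁻¹) / 2 := by
  rw [Real.cosh_eq, ← ofReal_exp_neg]; push_cast; rfl

theorem ofReal_sinh_eq (x : ℝ) :
    (Real.sinh x : ℂ) = ((Real.exp x : ℂ) - (Real.exp x : ℂ)⁻¹) / 2 := by
  rw [Real.sinh_eq, ← ofReal_exp_neg]; push_cast; rfl

theorem ofReal_exp_ne_zero (x : ℝ) : (Real.exp x : ℂ) ≠ 0 :=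
  ofReal_ne_zero.2 (Real.exp_pos x).ne'

end Complex

section TransferMatrix

variable (γ p a : ℝ) (b lam : ℂ)

def transferCore : Matrix (Fin 2) (Fin 2) ℂ :=
  !![lam ^ 2 - 2 * (a : ℂ) * (p : ℂ) * (Real.cosh (2 * γ) : ℂ) * lam + (a : ℂ) ^ 2,
      -(starRingEnd ℂ) b * ((p : ℂ) * lam - (a : ℂ) * (Real.exp (2 * γ) : ℂ));
    -(b * ((p : ℂ) * lam - (a : ℂ) * (Real.exp (-(2 * γ)) : ℂ))),
      ((‖b‖ : ℝ) : ℂ) ^ 2]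

theorem Tmat_eq_smul_transferCore (q : ℂ) :
    Tmat γ p a q b lam = (1 / (b * q * lam)) • transferCore γ p a b lam := rfl

variable {γ p a b lam}

theorem Jc_sq_sub_four_mul_Kc_mul_Kc' (hlam : lam ≠ 0) :
    Jc γ p a lam ^ 2 - 4 * Kc γ p a lam * Kc' γ p a lam =
      (lam + lam⁻¹ - 2 * p * a * (Real.cosh (2 * γ) : ℂ)) ^ 2 - 4 * (1 - a ^ 2) * (1 - p ^ 2) := by
  have hE := ofReal_exp_ne_zero (2 * γ)
  simp only [Jc, Kc, Kc', ofReal_cosh_eq, ofReal_sinh_eq, ofReal_exp_neg]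
  field_simp
  ring

theorem transferCore_trace (hb : ‖b‖ ^ 2 = 1 - a ^ 2) :
    (transferCore γ p a b lam).trace = lam ^ 2 - 2 * p * a * (Real.cosh (2 * γ) : ℂ) * lam + 1 := by
  have : ((‖b‖ : ℝ) : ℂ) ^ 2 = 1 - a ^ 2 := by exact_mod_cast hb
  simp only [transferCore, trace_fin_two_of, this]
  ring

theorem transferCore_det (hb : ‖b‖ ^ 2 = 1 - a ^ 2) :
    (transferCore γ p a b lam).det = (1 - a ^ 2) * (1 - p ^ 2) * lam ^ 2 := by
  have hb' : ((‖b‖ : ℝ) : ℂ) ^ 2 = 1 - a ^ 2 := by exact_mod_cast hb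
  have hconj : (starRingEnd ℂ) b * b = 1 - a ^ 2 := by
    rw [Complex.conj_mul', hb']
  have hE := ofReal_exp_ne_zero (2 * γ)
  rw [transferCore, det_fin_two_of, hb', ofReal_cosh_eq, ofReal_exp_neg]
  linear_combination (norm := skip) -(p * lam - a * (Real.exp (2 * γ) : ℂ)) *
    (p * lam - a * (Real.exp (2 * γ) : ℂ)⁻¹) * hconj
  field_simp
  ring

theorem isRoot_charpoly_transferCore (hb : ‖b‖ ^ 2 = 1 - a ^ 2) (hlam : lam ≠ 0) {w : ℂ}
    (hw : w ^ 2 = Jc γ p a lam ^ 2 - 4 * Kc γ p a lam * Kc' γ p a lam) :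
    (transferCore γ p a b lam).charpoly.IsRoot
      (lam * (lam + lam⁻¹ - 2 * p * a * (Real.cosh (2 * γ) : ℂ) + w) / 2) := by
  rw [Jc_sq_sub_four_mul_Kc_mul_Kc' hlam] at hw
  simp only [charpoly_fin_two, Polynomial.IsRoot, Polynomial.eval_add, Polynomial.eval_sub,
    Polynomial.eval_pow, Polynomial.eval_mul, Polynomial.eval_X, Polynomial.eval_C,
    transferCore_trace hb, transferCore_det hb]
  linear_combination (norm := skip) (lam ^ 2 / 4) * hw
  field_simp
  ring

theorem eigenvector_eq_neg_inv_smul (hb0 : b ≠ 0) (hb : ‖b‖ ^ 2 = 1 - a ^ 2) (hlam : lam ≠ 0)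
    (w : ℂ) :
    ![-(lam / (2 * b)) * (Jc γ p a lam + w -
        2 * (a : ℂ) * (Real.exp (2 * γ) : ℂ) * lam⁻¹ * Kc γ p a lam), Kc γ p a lam] =
      (-b⁻¹) • ![lam * (lam + lam⁻¹ - 2 * p * a * (Real.cosh (2 * γ) : ℂ) + w) / 2 -
          transferCore γ p a b lam 1 1, transferCore γ p a b lam 1 0] := by
  have hb' : ((‖b‖ : ℝ) : ℂ) ^ 2 = 1 - a ^ 2 := by exact_mod_cast hb
  have hE := ofReal_exp_ne_zero (2 * γ)
  ext i
  fin_cases i <;> simp only [transferCore, Jc, Kc, hb', ofReal_cosh_eq, ofReal_sinh_eq,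
    ofReal_exp_neg, Fin.zero_eta, Fin.mk_one, of_apply, cons_val', cons_val_zero, cons_val_one,
    empty_val', cons_val_fin_one, Pi.smul_apply, smul_eq_mul]
  · field_simp
    ring
  · field_simp

end TransferMatrix

theorem eigenvector_of_transfer_matrix_general (γ p : ℝ) (q : ℂ)
    (aP aM : ℝ) (haP : aP ∈ Set.Ioo (-1 : ℝ) 1) (haM : aM ∈ Set.Ioo (-1 : ℝ) 1)
    (bP bM : ℂ) (hbP : aP ^ 2 + ‖bP‖ ^ 2 = 1) (hbM : aM ^ 2 + ‖bM‖ ^ 2 = 1) (lam : ℂ) (hlam : lam ≠ 0)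
    (aS : ℝ) (bS : ℂ) (hmem : (aS, bS) = (aP, bP) ∨ (aS, bS) = (aM, bM))
    (hK : Kc γ p aS lam ≠ 0) (w : ℂ)
    (hw : w ^ 2 = Jc γ p aS lam ^ 2 - 4 * Kc γ p aS lam * Kc' γ p aS lam) :
    (![-(lam / (2 * bS)) * (Jc γ p aS lam + w -
          2 * (aS : ℂ) * (Real.exp (2 * γ) : ℂ) * lam⁻¹ * Kc γ p aS lam),
        Kc γ p aS lam] : Fin 2 → ℂ) ≠ 0 ∧
    (Tmat γ p aS q bS lam).mulVec
        ![-(lam / (2 * bS)) * (Jc γ p aS lam + w -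
            2 * (aS : ℂ) * (Real.exp (2 * γ) : ℂ) * lam⁻¹ * Kc γ p aS lam),
          Kc γ p aS lam] =
      ((lam + lam⁻¹ - 2 * (p : ℂ) * (aS : ℂ) * (Real.cosh (2 * γ) : ℂ) + w) / (2 * bS * q)) •
        ![-(lam / (2 * bS)) * (Jc γ p aS lam + w -
            2 * (aS : ℂ) * (Real.exp (2 * γ) : ℂ) * lam⁻¹ * Kc γ p aS lam),
          Kc γ p aS lam] := by
  obtain ⟨haS, habS⟩ : aS ∈ Set.Ioo (-1 : ℝ) 1 ∧ aS ^ 2 + ‖bS‖ ^ 2 = 1 := by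
    rcases hmem with h | h <;> obtain ⟨rfl, rfl⟩ := Prod.mk.inj h
    exacts [⟨haP, hbP⟩, ⟨haM, hbM⟩]
  have hb : ‖bS‖ ^ 2 = 1 - aS ^ 2 := by linarith
  refine ⟨fun h => hK (by simpa using congrFun h 1), ?_⟩
  rw [eigenvector_eq_neg_inv_smul (ne_zero_of_sq_add_norm_sq_eq_one haS habS) hb hlam,
    Tmat_eq_smul_transferCore, smul_mulVec, mulVec_smul,
    mulVec_eq_smul_of_isRoot_charpoly_fin_two _ (isRoot_charpoly_transferCore hb hlam hw),
    smul_smul, smul_smul, smul_smul]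
  congr 1
  field_simp

/-- For `K_* ≠ 0` and `w² = J_*² − 4 K_* K_*'`, the vector `v` below is a nonzero eigenvector
of `T_*` with eigenvalue `ζ = (λ + λ⁻¹ − 2 p a_* cosh(2γ) + w)/(2 b_* q)`. -/
theorem eigenvector_of_transfer_matrix (γ p : ℝ) (hp : p ∈ Set.Ioo (-1 : ℝ) 1) (q : ℂ)
    (hq : p ^ 2 + ‖q‖ ^ 2 = 1)
    (aP aM : ℝ) (haP : aP ∈ Set.Ioo (-1 : ℝ) 1) (haM : aM ∈ Set.Ioo (-1 : ℝ) 1)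
    (bP bM : ℂ) (hbP : aP ^ 2 + ‖bP‖ ^ 2 = 1) (hbM : aM ^ 2 + ‖bM‖ ^ 2 = 1) (lam : ℂ) (hlam : lam ≠ 0)
    (aS : ℝ) (bS : ℂ) (hmem : (aS, bS) = (aP, bP) ∨ (aS, bS) = (aM, bM))
    (hK : Kc γ p aS lam ≠ 0) (w : ℂ)
    (hw : w ^ 2 = Jc γ p aS lam ^ 2 - 4 * Kc γ p aS lam * Kc' γ p aS lam) :
    (![-(lam / (2 * bS)) * (Jc γ p aS lam + w -
          2 * (aS : ℂ) * (Real.exp (2 * γ) : ℂ) * lam⁻¹ * Kc γ p aS lam),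
        Kc γ p aS lam] : Fin 2 → ℂ) ≠ 0 ∧
    (Tmat γ p aS q bS lam).mulVec
        ![-(lam / (2 * bS)) * (Jc γ p aS lam + w -
            2 * (aS : ℂ) * (Real.exp (2 * γ) : ℂ) * lam⁻¹ * Kc γ p aS lam),
          Kc γ p aS lam] =
      ((lam + lam⁻¹ - 2 * (p : ℂ) * (aS : ℂ) * (Real.cosh (2 * γ) : ℂ) + w) / (2 * bS * q)) •
        ![-(lam / (2 * bS)) * (Jc γ p aS lam + w -
            2 * (aS : ℂ) * (Real.exp (2 * γ) : ℂ) * lam⁻¹ * Kc γ p aS lam),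
          Kc γ p aS lam] :=
  eigenvector_of_transfer_matrix_general γ p q aP aM haP haM bP bM hbP hbM lam hlam aS bS hmem hK w
    hw
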